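/- arXiv:2106.12031 — 2 statements merged into one kernel-verified Lean document; each statement's English description precedes it below -/
import Mathlib

section
/- Let R be a (possibly nonunital) ring such that every finite subset of R is contained in a corner eRe that is an exchange unital ring. Then R is exchange in the nonunital sense: for every x ∈ R there is an idempotent f ∈ xR with f ∈ x ∘ R, where x ∘ y = x + y − xy. -/
namespace IsIdempotentElem

variable {R : Type*} [NonUnitalRing R] {e a : R}

theorem mul_eq_of_corner (he : IsIdempotentElem e) (ha : e * a * e = a) : a * e = a := by
  rw [← ha, mul_assoc _ e e, he.eq]

theorem eq_mul_of_corner (he : IsIdempotentElem e) (ha : e * a * e = a) : e * a = a := by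
  rw [← ha, ← mul_assoc, ← mul_assoc, he.eq]

end IsIdempotentElem

/-- An exchange witness `e - f = (e - x) t` in the corner `eRe` makes `f = x ∘ (e - t)`. -/
theorem eq_add_sub_mul_of_sub_eq_sub_mul {R : Type*} [NonUnitalRing R] {e x f t : R}
    (hx : x * e = x) (ht : e * t = t) (hf : e - f = (e - x) * t) :
    f = x + (e - t) - x * (e - t) := by
  have : f = e - (e - x) * t := by rw [← hf, sub_sub_cancel]
  rw [this, sub_mul, mul_sub, hx, ht]
  abel

/-- If every finite subset of a possibly nonunital ring `R` is contained in an
exchange corner `eRe`, then `R` is exchange in the nonunital sense (Ara):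
for every `x` there is an idempotent `f ∈ xR` with `f ∈ x ∘ R`,
where `x ∘ y = x + y - x*y`. -/
theorem stmt_7 (R : Type*) [NonUnitalRing R]
    (h : ∀ s : Finset R, ∃ e : R, e * e = e ∧ (∀ x ∈ s, e * x * e = x) ∧
      (∀ a : R, e * a * e = a → ∃ f : R, f * f = f ∧
        (∃ r : R, e * r * e = r ∧ f = a * r) ∧
        (∃ t : R, e * t * e = t ∧ e - f = (e - a) * t))) :
    ∀ x : R, ∃ f : R, f * f = f ∧ (∃ r : R, f = x * r) ∧
      (∃ y : R, f = x + y - x * y) := by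
  intro x
  obtain ⟨e, he, hxe, hexchange⟩ := h {x}
  have hx : e * x * e = x := hxe x (Finset.mem_singleton_self x)
  obtain ⟨f, hf, ⟨r, -, hfr⟩, ⟨t, ht, hft⟩⟩ := hexchange x hx
  exact ⟨f, hf, ⟨r, hfr⟩, e - t, eq_add_sub_mul_of_sub_eq_sub_mul
    (IsIdempotentElem.mul_eq_of_corner he hx) (IsIdempotentElem.eq_mul_of_corner he ht) hft⟩
end

section
/- Let E be a directed graph, K a field, and suppose the Leavitt path algebra L_K(E) with its natural ℤ-grading is graded exchange: for every homogeneous x ∈ L_K(E) there is an idempotent u ∈ L_K(E)₀ with u ∈ x·L_K(E) and u ∈ x ∘ L_K(E) (where x ∘ y = x + y − xy). Then E is a no-exit graph: no cycle in E has an exit. -/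
/-! Leavitt path algebra of a directed graph, defined as a `RingQuot` of the
free algebra on vertices, edges and ghost edges. -/

structure LPAGraph where
  V : Type
  E : Type
  s : E → V
  r : E → V

namespace LPAGraph

inductive Gen (G : LPAGraph)
  | vert : G.V → Gen G
  | edge : G.E → Gen G
  | ghost : G.E → Gen G

variable (K : Type) [Field K] (G : LPAGraph)

open FreeAlgebra in
/-- The Leavitt path algebra relations. -/
inductive Rel : FreeAlgebra K (Gen G) → FreeAlgebra K (Gen G) → Prop
  | vv {u w : G.V} (h : u ≠ w) :
      Rel (ι K (Gen.vert u) * ι K (Gen.vert w)) 0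
  | v_idem (u : G.V) :
      Rel (ι K (Gen.vert u) * ι K (Gen.vert u)) (ι K (Gen.vert u))
  | se (e : G.E) : Rel (ι K (Gen.vert (G.s e)) * ι K (Gen.edge e)) (ι K (Gen.edge e))
  | er (e : G.E) : Rel (ι K (Gen.edge e) * ι K (Gen.vert (G.r e))) (ι K (Gen.edge e))
  | rg (e : G.E) : Rel (ι K (Gen.vert (G.r e)) * ι K (Gen.ghost e)) (ι K (Gen.ghost e))
  | gs (e : G.E) : Rel (ι K (Gen.ghost e) * ι K (Gen.vert (G.s e))) (ι K (Gen.ghost e))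
  | ck1_ne {e f : G.E} (h : e ≠ f) :
      Rel (ι K (Gen.ghost e) * ι K (Gen.edge f)) 0
  | ck1 (e : G.E) :
      Rel (ι K (Gen.ghost e) * ι K (Gen.edge e)) (ι K (Gen.vert (G.r e)))
  | ck2 (v : G.V) (hfin : {e : G.E | G.s e = v}.Finite)
      (hne : {e : G.E | G.s e = v}.Nonempty) :
      Rel (ι K (Gen.vert v))
        (hfin.toFinset.sum fun e => ι K (Gen.edge e) * ι K (Gen.ghost e))

/-- The Leavitt path algebra (inside its canonical unital envelope). -/
abbrev L := RingQuot (Rel K G)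

/-- The image of a vertex in the Leavitt path algebra. -/
def vert (v : G.V) : L K G := RingQuot.mkRingHom (Rel K G) (FreeAlgebra.ι K (Gen.vert v))

/-- The image of an edge. -/
def edge (e : G.E) : L K G := RingQuot.mkRingHom (Rel K G) (FreeAlgebra.ι K (Gen.edge e))

/-- The image of a ghost edge `e*`. -/
def ghost (e : G.E) : L K G := RingQuot.mkRingHom (Rel K G) (FreeAlgebra.ι K (Gen.ghost e))

/-- The product `e₁⋯eₙ` associated with a list of edges. -/
def pathProd (p : List G.E) : L K G := (p.map (edge K G)).prod

/-- The product `eₙ*⋯e₁*` associated with a list of edges. -/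
def starProd (p : List G.E) : L K G := (p.reverse.map (ghost K G)).prod

/-- The list of edges forms a path. -/
def IsPath (p : List G.E) : Prop := p.Chain' fun e f => G.r e = G.s f

/-- Monomials `p q*` of degree `n = |p| - |q|` (with `r(p) = r(q) = v`). -/
def monoSet (n : ℤ) : Set (L K G) :=
  { x | ∃ (p q : List G.E) (v : G.V), IsPath G p ∧ IsPath G q ∧
      (∀ e : G.E, p.getLast? = some e → G.r e = v) ∧
      (∀ e : G.E, q.getLast? = some e → G.r e = v) ∧
      (p.length : ℤ) - q.length = n ∧
      x = pathProd K G p * vert K G v * starProd K G q }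

/-- The degree-`n` homogeneous component of the Leavitt path algebra. -/
def component (n : ℤ) : Submodule K (L K G) := Submodule.span K (monoSet K G n)

/-- The Leavitt path algebra as a subspace of its unital envelope:
the span of all monomials `p q*`. -/
def lpa : Submodule K (L K G) := Submodule.span K (⋃ n : ℤ, monoSet K G n)

end LPAGraph

/-! Grade `L K G` through the algebra map `deg : L → L[ℤ]`. Let `c = e p` be a closed path at
`v = s(e)`. Exchange for `c ∈ L_{|c|}` gives `u ∈ L₀` with `u = c r` and `u = c + t - c t`;
the degree-`k|c|` components of `t - 1 = (u - 1) + c (t - 1)`, which vanish for large `|k|`, yield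
`c ^ n u = c ^ n`. Hence `v u = v`, as `v = (c*) ^ n c ^ n`, while `c c* u = u` as `u = c r`;
together these force `u = v = c c*`. An exit `f ≠ e` at `v` would then give
`r(f) = f* v f = f* e p c* f = 0`, but vertices act nontrivially on the span of maximal paths. -/

lemma Finsupp.exists_apply_eq_zero_of_lt_natAbs {R : Type*} [Zero R] (f : ℤ →₀ R) :
    ∃ N : ℕ, ∀ j : ℤ, N < j.natAbs → f j = 0 :=
  ⟨f.support.sup Int.natAbs, fun _ hj =>
    Finsupp.notMem_support_iff.mp fun hmem => (Finset.le_sup hmem).not_gt hj⟩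

namespace AddMonoidAlgebra

variable {R : Type*} [Ring R]

lemma exists_pow_mul_eq_pow_of_single_eq {m : ℤ} (hm : 0 < m) {x u : R} {t : R[ℤ]}
    (h : single 0 u = single m x + t - single m x * t) :
    ∃ n : ℕ, x ^ (n + 1) * u = x ^ (n + 1) := by
  -- `y := t - 1` solves `y = single 0 (u - 1) + single m x * y`; compare coefficients.
  set y := t - 1
  have hy : y = single 0 (u - 1) + single m x * y := by
    simp only [y]
    rw [single_sub, ← one_def, h, mul_sub, mul_one]
    abel
  have hcoeff (j : ℤ) : y.coeff j = (if j = 0 then u - 1 else 0) + x * y.coeff (j - m) := by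
    conv_lhs => rw [hy]
    rw [coeff_add, Finsupp.add_apply, coeff_single_mul_apply, coeff_single, Finsupp.single_apply,
      neg_add_eq_sub]
    simp only [eq_comm]
  have hpos (k : ℕ) : y.coeff ((k + 1) * m) = x ^ (k + 1) * y.coeff 0 := by
    induction k with
    | zero => simpa [if_neg hm.ne'] using hcoeff m
    | succ k ih =>
      rw [hcoeff, if_neg (by positivity), zero_add, pow_succ', mul_assoc, ← ih]
      push_cast; ring_nf
  have hneg (k : ℕ) : y.coeff (-m) = x ^ k * y.coeff (-((k + 1) * m)) := by
    induction k with
    | zero => simp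
    | succ k ih =>
      rw [ih, hcoeff (-((k + 1) * m)), if_neg (by nlinarith), zero_add, pow_succ, mul_assoc]
      push_cast; ring_nf
  obtain ⟨N, hN⟩ := y.coeff.exists_apply_eq_zero_of_lt_natAbs
  have hlarge : N < ((N + 1 : ℕ) * m).natAbs := by
    rw [Int.natAbs_mul, Int.natAbs_natCast]
    nlinarith [Int.natAbs_pos.mpr hm.ne']
  have hy0 : y.coeff 0 = u - 1 := by
    rw [hcoeff, if_pos rfl, zero_sub, hneg N, hN _ (by simpa using hlarge)]
    simp
  refine ⟨N, sub_eq_zero.mp ?_⟩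
  rw [← mul_sub_one, ← hy0, ← hpos, hN _ (by exact_mod_cast hlarge)]

end AddMonoidAlgebra

lemma mul_eq_of_pow_succ_mul_eq_pow {M : Type*} [Monoid M] {x y w u r : M} (hyx : y * x = w)
    (hwx : w * x = x) (hxw : x * w = x) (hyw : y * w = y) (hu : u = x * r) {n : ℕ}
    (hn : x ^ (n + 1) * u = x ^ (n + 1)) : x * y = w := by
  have hpow (k : ℕ) : y ^ (k + 1) * x ^ (k + 1) = w := by
    induction k with
    | zero => simpa using hyx
    | succ k ih =>
      calc y ^ (k + 2) * x ^ (k + 2) = y ^ (k + 1) * ((y * x) * x ^ (k + 1)) := by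
            rw [pow_succ y, pow_succ' x]; simp only [mul_assoc]
        _ = w := by rw [hyx, pow_succ' x k, ← mul_assoc w, hwx, ← pow_succ' x k, ih]
  have hwu : w * u = w := by rw [← hpow n, mul_assoc, hn]
  have hxyu : x * y * u = u := by
    rw [hu, mul_assoc, ← mul_assoc y, hyx, ← mul_assoc, hxw]
  have huw : u = w := by
    calc u = w * x * y * u := by rw [hwx, hxyu]
      _ = w := by rw [mul_assoc, mul_assoc, ← mul_assoc x, hxyu, hwu]
  calc x * y = x * y * u := by rw [huw, mul_assoc, hyw]
    _ = w := by rw [hxyu, huw]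

namespace LPAGraph

variable {K : Type} [Field K] {G : LPAGraph}

lemma vert_mul_vert_of_ne {u w : G.V} (h : u ≠ w) : vert K G u * vert K G w = 0 := by
  rw [vert, vert, ← map_mul, RingQuot.mkRingHom_rel (Rel.vv h), map_zero]

lemma vert_mul_self (v : G.V) : vert K G v * vert K G v = vert K G v := by
  rw [vert, ← map_mul, RingQuot.mkRingHom_rel (Rel.v_idem v)]

lemma vert_mul_edge (e : G.E) : vert K G (G.s e) * edge K G e = edge K G e := by
  rw [vert, edge, ← map_mul, RingQuot.mkRingHom_rel (Rel.se e)]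

lemma edge_mul_vert (e : G.E) : edge K G e * vert K G (G.r e) = edge K G e := by
  rw [vert, edge, ← map_mul, RingQuot.mkRingHom_rel (Rel.er e)]

lemma vert_mul_ghost (e : G.E) : vert K G (G.r e) * ghost K G e = ghost K G e := by
  rw [vert, ghost, ← map_mul, RingQuot.mkRingHom_rel (Rel.rg e)]

lemma ghost_mul_vert (e : G.E) : ghost K G e * vert K G (G.s e) = ghost K G e := by
  rw [vert, ghost, ← map_mul, RingQuot.mkRingHom_rel (Rel.gs e)]

lemma ghost_mul_edge_of_ne {e f : G.E} (h : e ≠ f) : ghost K G e * edge K G f = 0 := by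
  rw [ghost, edge, ← map_mul, RingQuot.mkRingHom_rel (Rel.ck1_ne h), map_zero]

lemma ghost_mul_edge (e : G.E) : ghost K G e * edge K G e = vert K G (G.r e) := by
  rw [ghost, edge, vert, ← map_mul, RingQuot.mkRingHom_rel (Rel.ck1 e)]

lemma vert_eq_sum_edge_mul_ghost (v : G.V) (hfin : {e : G.E | G.s e = v}.Finite)
    (hne : {e : G.E | G.s e = v}.Nonempty) :
    vert K G v = ∑ e ∈ hfin.toFinset, edge K G e * ghost K G e := by
  simp only [vert, edge, ghost, ← map_mul, ← map_sum,
    RingQuot.mkRingHom_rel (Rel.ck2 v hfin hne)]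

structure LeavittFamily (G : LPAGraph) (A : Type*) [Semiring A] where
  vert : G.V → A
  edge : G.E → A
  ghost : G.E → A
  vert_mul_vert_of_ne : ∀ {u w : G.V}, u ≠ w → vert u * vert w = 0
  vert_mul_self : ∀ v, vert v * vert v = vert v
  vert_mul_edge : ∀ e, vert (G.s e) * edge e = edge e
  edge_mul_vert : ∀ e, edge e * vert (G.r e) = edge e
  vert_mul_ghost : ∀ e, vert (G.r e) * ghost e = ghost e
  ghost_mul_vert : ∀ e, ghost e * vert (G.s e) = ghost e
  ghost_mul_edge_of_ne : ∀ {e f : G.E}, e ≠ f → ghost e * edge f = 0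
  ghost_mul_edge : ∀ e, ghost e * edge e = vert (G.r e)
  vert_eq_sum : ∀ v (hfin : {e : G.E | G.s e = v}.Finite),
    {e : G.E | G.s e = v}.Nonempty → vert v = ∑ e ∈ hfin.toFinset, edge e * ghost e

namespace LeavittFamily

variable {A : Type*} [Semiring A] [Algebra K A] (F : LeavittFamily G A)

def onGen : Gen G → A
  | .vert v => F.vert v
  | .edge e => F.edge e
  | .ghost e => F.ghost e

lemma lift_onGen_rel ⦃x y : FreeAlgebra K (Gen G)⦄ (h : Rel K G x y) :
    FreeAlgebra.lift K F.onGen x = FreeAlgebra.lift K F.onGen y := by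
  induction h <;>
    simp only [map_mul, map_zero, map_sum, FreeAlgebra.lift_ι_apply, onGen]
  case vv h => exact F.vert_mul_vert_of_ne h
  case v_idem v => exact F.vert_mul_self v
  case se e => exact F.vert_mul_edge e
  case er e => exact F.edge_mul_vert e
  case rg e => exact F.vert_mul_ghost e
  case gs e => exact F.ghost_mul_vert e
  case ck1_ne h => exact F.ghost_mul_edge_of_ne h
  case ck1 e => exact F.ghost_mul_edge e
  case ck2 v hfin hne => exact F.vert_eq_sum v hfin hne

variable (K) in
def lift : L K G →ₐ[K] A :=
  RingQuot.liftAlgHom K ⟨FreeAlgebra.lift K F.onGen, F.lift_onGen_rel⟩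

lemma lift_mkRingHom (x : FreeAlgebra K (Gen G)) :
    F.lift K (RingQuot.mkRingHom (Rel K G) x) = FreeAlgebra.lift K F.onGen x := by
  rw [← RingQuot.mkAlgHom_coe K]
  exact RingQuot.liftAlgHom_mkAlgHom_apply K _ _ x

@[simp] lemma lift_vert (v : G.V) : F.lift K (LPAGraph.vert K G v) = F.vert v := by
  rw [LPAGraph.vert, lift_mkRingHom, FreeAlgebra.lift_ι_apply, onGen]

@[simp] lemma lift_edge (e : G.E) : F.lift K (LPAGraph.edge K G e) = F.edge e := by
  rw [LPAGraph.edge, lift_mkRingHom, FreeAlgebra.lift_ι_apply, onGen]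

@[simp] lemma lift_ghost (e : G.E) : F.lift K (LPAGraph.ghost K G e) = F.ghost e := by
  rw [LPAGraph.ghost, lift_mkRingHom, FreeAlgebra.lift_ι_apply, onGen]

end LeavittFamily

variable (K G) in
def leavittFamily : LeavittFamily G (L K G) where
  vert := vert K G
  edge := edge K G
  ghost := ghost K G
  vert_mul_vert_of_ne := vert_mul_vert_of_ne
  vert_mul_self := vert_mul_self
  vert_mul_edge := vert_mul_edge
  edge_mul_vert := edge_mul_vert
  vert_mul_ghost := vert_mul_ghost
  ghost_mul_vert := ghost_mul_vert
  ghost_mul_edge_of_ne := ghost_mul_edge_of_ne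
  ghost_mul_edge := ghost_mul_edge
  vert_eq_sum := vert_eq_sum_edge_mul_ghost

section Grading

open AddMonoidAlgebra


noncomputable def LeavittFamily.graded {A : Type*} [Semiring A] (F : LeavittFamily G A) :
    LeavittFamily G A[ℤ] where
  vert v := single 0 (F.vert v)
  edge e := single 1 (F.edge e)
  ghost e := single (-1) (F.ghost e)
  vert_mul_vert_of_ne h := by rw [single_mul_single, F.vert_mul_vert_of_ne h, single_zero]
  vert_mul_self v := by rw [single_mul_single, F.vert_mul_self, add_zero]
  vert_mul_edge e := by rw [single_mul_single, F.vert_mul_edge, zero_add]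
  edge_mul_vert e := by rw [single_mul_single, F.edge_mul_vert, add_zero]
  vert_mul_ghost e := by rw [single_mul_single, F.vert_mul_ghost, zero_add]
  ghost_mul_vert e := by rw [single_mul_single, F.ghost_mul_vert, add_zero]
  ghost_mul_edge_of_ne h := by rw [single_mul_single, F.ghost_mul_edge_of_ne h, single_zero]
  ghost_mul_edge e := by rw [single_mul_single, F.ghost_mul_edge, neg_add_cancel]
  vert_eq_sum v hfin hne := by
    simp only [single_mul_single, add_neg_cancel, F.vert_eq_sum v hfin hne]
    exact map_sum (singleAddHom 0) _ _

variable (K G) in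
/-- The `ℤ`-grading of `L K G`, encoded as an algebra map into Laurent polynomials over it. -/
noncomputable def deg : L K G →ₐ[K] (L K G)[ℤ] := (leavittFamily K G).graded.lift K

@[simp] lemma deg_vert (v : G.V) : deg K G (vert K G v) = single 0 (vert K G v) :=
  LeavittFamily.lift_vert _ v

@[simp] lemma deg_edge (e : G.E) : deg K G (edge K G e) = single 1 (edge K G e) :=
  LeavittFamily.lift_edge _ e

@[simp] lemma deg_ghost (e : G.E) : deg K G (ghost K G e) = single (-1) (ghost K G e) :=
  LeavittFamily.lift_ghost _ e

lemma deg_pathProd (p : List G.E) :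
    deg K G (pathProd K G p) = single (p.length : ℤ) (pathProd K G p) := by
  induction p with
  | nil => exact map_one _
  | cons e p ih =>
    simp only [pathProd, List.map_cons, List.prod_cons, map_mul] at ih ⊢
    rw [ih, deg_edge, single_mul_single, List.length_cons, Nat.cast_succ, add_comm]

lemma deg_starProd (p : List G.E) :
    deg K G (starProd K G p) = single (-p.length : ℤ) (starProd K G p) := by
  induction p with
  | nil => exact map_one _
  | cons e p ih =>
    simp only [starProd, List.reverse_cons, List.map_append, List.prod_append, List.map_cons,
      List.map_nil, List.prod_cons, List.prod_nil, mul_one, map_mul] at ih ⊢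
    rw [ih, deg_ghost, single_mul_single, List.length_cons, Nat.cast_succ, neg_add]

lemma deg_eq_single_of_mem_component {n : ℤ} {x : L K G} (hx : x ∈ component K G n) :
    deg K G x = single n x := by
  suffices component K G n ≤ LinearMap.eqLocus (deg K G).toLinearMap (lsingle n) from this hx
  rw [component, Submodule.span_le]
  rintro - ⟨p, q, v, -, -, -, -, rfl, rfl⟩
  simp only [SetLike.mem_coe, LinearMap.mem_eqLocus, AlgHom.toLinearMap_apply, lsingle_apply,
    map_mul, deg_pathProd, deg_vert, deg_starProd, single_mul_single, add_zero, sub_eq_add_neg]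

end Grading

section MaximalPath

open scoped Classical

def stepSrc : G.E ⊕ G.V → G.V
  | .inl e => G.s e
  | .inr v => v

def stepTgt : G.E ⊕ G.V → G.V
  | .inl e => G.r e
  | .inr v => v

def StepLink : G.E ⊕ G.V → G.E ⊕ G.V → Prop
  | .inl e, x => G.r e = stepSrc x
  | .inr v, x => x = .inr v ∧ ∀ e, G.s e ≠ v

variable (G) in
/-- Maximal paths: infinite paths, and finite paths ending at a sink `v`, padded by `.inr v`. -/
@[ext] structure MaximalPath where
  steps : Stream' (G.E ⊕ G.V)
  link : ∀ n, StepLink (steps.get n) (steps.get (n + 1))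

namespace MaximalPath

def src (b : MaximalPath G) : G.V := stepSrc b.steps.head

def tail (b : MaximalPath G) : MaximalPath G := ⟨b.steps.tail, fun n => b.link (n + 1)⟩

def cons (e : G.E) (b : MaximalPath G) (h : G.r e = b.src) : MaximalPath G :=
  ⟨Stream'.cons (.inl e) b.steps, fun | 0 => h | n + 1 => b.link n⟩

@[simp] lemma src_cons (e : G.E) (b : MaximalPath G) (h : G.r e = b.src) :
    (b.cons e h).src = G.s e := rfl

@[simp] lemma head_cons (e : G.E) (b : MaximalPath G) (h : G.r e = b.src) :
    (b.cons e h).steps.head = .inl e := rfl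

@[simp] lemma tail_cons (e : G.E) (b : MaximalPath G) (h : G.r e = b.src) :
    (b.cons e h).tail = b := rfl

lemma src_eq_of_head_eq {b : MaximalPath G} {e : G.E} (h : b.steps.head = .inl e) :
    b.src = G.s e := by
  rw [src, h, stepSrc]

lemma r_eq_src_tail {b : MaximalPath G} {e : G.E} (h : b.steps.head = .inl e) :
    G.r e = b.tail.src := by
  have := b.link 0
  rwa [← Stream'.head, h] at this

lemma cons_tail {b : MaximalPath G} {e : G.E} (h : b.steps.head = .inl e) :
    b.tail.cons e (r_eq_src_tail h) = b := by
  ext1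
  show Stream'.cons _ b.steps.tail = b.steps
  rw [← h]
  exact Stream'.eta b.steps

noncomputable def nextStep (v : G.V) : G.E ⊕ G.V :=
  if h : ∃ e, G.s e = v then .inl h.choose else .inr v

lemma stepSrc_nextStep (v : G.V) : stepSrc (nextStep v) = v := by
  unfold nextStep
  split_ifs with h
  · exact h.choose_spec
  · rfl

lemma stepLink_nextStep (v : G.V) :
    StepLink (nextStep v) (nextStep (stepTgt (nextStep v))) := by
  by_cases h : ∃ e, G.s e = v
  · have hv : nextStep v = .inl h.choose := dif_pos h
    rw [hv]
    exact (stepSrc_nextStep _).symm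
  · have hv : nextStep v = .inr v := dif_neg h
    rw [hv]
    exact ⟨hv, fun e he => h ⟨e, he⟩⟩

noncomputable def ofVertex (v : G.V) : MaximalPath G :=
  ⟨fun n => nextStep ((stepTgt ∘ nextStep)^[n] v), fun n => by
    simp only [Stream'.get, Function.iterate_succ_apply']
    exact stepLink_nextStep _⟩

@[simp] lemma src_ofVertex (v : G.V) : (ofVertex v).src = v := stepSrc_nextStep v

end MaximalPath

open MaximalPath Finsupp

variable (K G) in
abbrev PathModule : Type := MaximalPath G →₀ K

noncomputable def vertAct (v : G.V) (b : MaximalPath G) : PathModule K G :=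
  if b.src = v then single b 1 else 0

noncomputable def edgeAct (e : G.E) (b : MaximalPath G) : PathModule K G :=
  if h : G.r e = b.src then single (b.cons e h) 1 else 0

noncomputable def ghostAct (e : G.E) (b : MaximalPath G) : PathModule K G :=
  if b.steps.head = .inl e then single b.tail 1 else 0

lemma ghostAct_of_head_ne {e : G.E} {b : MaximalPath G} (h : b.steps.head ≠ .inl e) :
    ghostAct (K := K) e b = 0 :=
  if_neg h

lemma ghostAct_eq_zero_of_src_ne {e : G.E} {b : MaximalPath G} (h : b.src ≠ G.s e) :
    ghostAct (K := K) e b = 0 :=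
  ghostAct_of_head_ne (K := K) fun hb => h (src_eq_of_head_eq hb)

lemma sum_edgeAct_ghostAct {v : G.V} (hfin : {e : G.E | G.s e = v}.Finite)
    (hne : {e : G.E | G.s e = v}.Nonempty) (b : MaximalPath G) :
    ∑ e ∈ hfin.toFinset, linearCombination K (edgeAct e) (ghostAct e b) =
      vertAct (K := K) v b := by
  rcases hb : b.steps.head with a | w
  · have hsrc := src_eq_of_head_eq hb
    by_cases ha : G.s a = v
    · have hne' (e : G.E) (hea : e ≠ a) : b.steps.head ≠ .inl e := by
        simpa [hb] using Ne.symm hea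
      rw [Finset.sum_eq_single_of_mem a (by simpa using ha) fun e _ hea => by
        rw [ghostAct_of_head_ne (hne' e hea), map_zero]]
      rw [ghostAct, if_pos hb, linearCombination_single, one_smul, edgeAct,
        dif_pos (r_eq_src_tail hb), cons_tail hb, vertAct, if_pos (hsrc.trans ha)]
    · rw [vertAct, if_neg (hsrc ▸ ha), Finset.sum_eq_zero fun e he => ?_]
      rw [ghostAct_eq_zero_of_src_ne fun h => ha (hsrc.symm.trans (h.trans
        (hfin.mem_toFinset.mp he))), map_zero]
  · have hsink := b.link 0
    rw [← Stream'.head, hb] at hsink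
    have hsrc : b.src = w := by rw [src, hb, stepSrc]
    rw [vertAct, if_neg fun hw => ?_, Finset.sum_eq_zero fun e _ => ?_]
    · rw [ghostAct_of_head_ne (by simp [hb]), map_zero]
    · obtain ⟨e, he⟩ := hne
      exact hsink.2 e (he.trans (hsrc.symm.trans hw).symm)

lemma end_ext_single {φ ψ : Module.End K (PathModule K G)}
    (h : ∀ b, φ (single b 1) = ψ (single b 1)) : φ = ψ :=
  lhom_ext' fun b => LinearMap.ext_ring (h b)

variable (K G) in
noncomputable def pathFamily : LeavittFamily G (Module.End K (PathModule K G)) where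
  vert v := linearCombination K (vertAct v)
  edge e := linearCombination K (edgeAct e)
  ghost e := linearCombination K (ghostAct e)
  vert_mul_vert_of_ne {u w} h := end_ext_single fun b => by
    by_cases hb : b.src = w <;> simp [vertAct, hb, Ne.symm h]
  vert_mul_self v := end_ext_single fun b => by
    by_cases hb : b.src = v <;> simp [vertAct, hb]
  vert_mul_edge e := end_ext_single fun b => by
    by_cases hb : G.r e = b.src <;> simp [vertAct, edgeAct, hb]
  edge_mul_vert e := end_ext_single fun b => by
    by_cases hb : b.src = G.r e <;> simp [vertAct, edgeAct, hb, eq_comm]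
  vert_mul_ghost e := end_ext_single fun b => by
    by_cases hb : b.steps.head = .inl e
    · simp [vertAct, ghostAct, hb, ← r_eq_src_tail hb]
    · simp [ghostAct, hb]
  ghost_mul_vert e := end_ext_single fun b => by
    by_cases hb : b.src = G.s e <;> simp [vertAct, hb, ghostAct_eq_zero_of_src_ne]
  ghost_mul_edge_of_ne {e f} h := end_ext_single fun b => by
    by_cases hb : G.r f = b.src <;> simp [edgeAct, ghostAct, hb, Ne.symm h]
  ghost_mul_edge e := end_ext_single fun b => by
    by_cases hb : G.r e = b.src
    · simp [vertAct, edgeAct, ghostAct, hb]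
    · simp [vertAct, edgeAct, hb, Ne.symm hb]
  vert_eq_sum v hfin hne := end_ext_single fun b => by
    simp [sum_edgeAct_ghostAct hfin hne]

end MaximalPath

variable (K) in
lemma vert_ne_zero (v : G.V) : vert K G v ≠ 0 := by
  intro h
  have := congrArg (fun φ => φ (Finsupp.single (MaximalPath.ofVertex v) 1))
    (congrArg ((pathFamily K G).lift K) h)
  simp [pathFamily, vertAct] at this

@[simp] lemma pathProd_cons (e : G.E) (p : List G.E) :
    pathProd K G (e :: p) = edge K G e * pathProd K G p := by
  simp [pathProd]

@[simp] lemma starProd_cons (e : G.E) (p : List G.E) :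
    starProd K G (e :: p) = starProd K G p * ghost K G e := by
  simp [starProd]

lemma vert_mul_pathProd_cons (e : G.E) (p : List G.E) :
    vert K G (G.s e) * pathProd K G (e :: p) = pathProd K G (e :: p) := by
  rw [pathProd_cons, ← mul_assoc, vert_mul_edge]

lemma starProd_cons_mul_vert (e : G.E) (p : List G.E) :
    starProd K G (e :: p) * vert K G (G.s e) = starProd K G (e :: p) := by
  rw [starProd_cons, mul_assoc, ghost_mul_vert]

lemma pathProd_mul_vert {e a : G.E} {p : List G.E} (hp : IsPath G (e :: p ++ [a])) :
    pathProd K G (e :: p) * vert K G (G.s a) = pathProd K G (e :: p) := by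
  induction p generalizing e with
  | nil =>
    have hea : G.r e = G.s a := (List.isChain_pair (R := fun e f => G.r e = G.s f)).mp hp
    rw [pathProd_cons, pathProd, List.map_nil, List.prod_nil, mul_one, ← hea, edge_mul_vert]
  | cons e' p ih =>
    rw [pathProd_cons, mul_assoc, ih (List.isChain_cons_cons.mp hp).2]

lemma starProd_mul_pathProd {e a : G.E} {p : List G.E} (hp : IsPath G (e :: p ++ [a])) :
    starProd K G (e :: p) * pathProd K G (e :: p) = vert K G (G.s a) := by
  induction p generalizing e with
  | nil =>
    have hea : G.r e = G.s a := (List.isChain_pair (R := fun e f => G.r e = G.s f)).mp hp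
    simp [starProd, pathProd, ghost_mul_edge, hea]
  | cons e' p ih =>
    obtain ⟨hee', hp⟩ := List.isChain_cons_cons.mp hp
    calc starProd K G (e :: e' :: p) * pathProd K G (e :: e' :: p)
        = starProd K G (e' :: p) * (ghost K G e * edge K G e) * pathProd K G (e' :: p) := by
          simp only [starProd_cons, pathProd_cons, mul_assoc]
      _ = vert K G (G.s a) := by
          rw [ghost_mul_edge, hee', mul_assoc, vert_mul_pathProd_cons, ih hp]

lemma pathProd_mem_component {e a : G.E} {p : List G.E} (hp : IsPath G (e :: p ++ [a])) :
    pathProd K G (e :: p) ∈ component K G (p.length + 1) := by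
  refine Submodule.subset_span ⟨e :: p, [], G.s a, ?_, .nil, fun e' he' => ?_, by simp, by simp,
    by rw [starProd, List.reverse_nil, List.map_nil, List.prod_nil, mul_one,
      pathProd_mul_vert hp]⟩
  · exact (List.isChain_append.mp hp).1
  · exact (List.isChain_append.mp hp).2.2 e' he' a rfl

lemma exists_isPath_cons_append_singleton {c : List G.E} (hc : c ≠ []) (hpath : IsPath G c)
    (hclosed : G.r (c.getLast hc) = G.s (c.head hc)) {e : G.E} (he : e ∈ c) :
    ∃ p, IsPath G (e :: p ++ [e]) := by
  obtain ⟨l₁, l₂, rfl⟩ := List.append_of_mem he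
  refine ⟨l₂ ++ l₁, ?_⟩
  have hcyc : Cycle.Chain (fun e f => G.r e = G.s f) (l₁ ++ e :: l₂ : List G.E) :=
    (Cycle.chain_ne_nil _ hc).mpr (List.isChain_cons.mpr
      ⟨by simpa [List.head?_eq_some_head hc] using hclosed, hpath⟩)
  rw [Cycle.coe_eq_coe.mpr List.isRotated_append, List.cons_append, Cycle.chain_coe_cons] at hcyc
  exact hcyc

lemma vert_eq_pathProd_mul_starProd_of_exchange {e : G.E} {p : List G.E}
    (hp : IsPath G (e :: p ++ [e])) {u r t : L K G} (hu : u ∈ component K G 0)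
    (hur : u = pathProd K G (e :: p) * r)
    (hut : u = pathProd K G (e :: p) + t - pathProd K G (e :: p) * t) :
    vert K G (G.s e) = pathProd K G (e :: p) * starProd K G (e :: p) := by
  have hdeg : AddMonoidAlgebra.single 0 u =
      AddMonoidAlgebra.single ((e :: p).length : ℤ) (pathProd K G (e :: p)) + deg K G t -
        AddMonoidAlgebra.single ((e :: p).length : ℤ) (pathProd K G (e :: p)) * deg K G t := by
    rw [← deg_eq_single_of_mem_component hu, ← deg_pathProd, hut, map_sub, map_add, map_mul]
  obtain ⟨n, hn⟩ := AddMonoidAlgebra.exists_pow_mul_eq_pow_of_single_eq (by simp) hdeg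
  exact (mul_eq_of_pow_succ_mul_eq_pow (starProd_mul_pathProd hp) (vert_mul_pathProd_cons e p)
    (pathProd_mul_vert hp) (starProd_cons_mul_vert e p) hur hn).symm

lemma eq_of_vert_eq_pathProd_mul_starProd {e : G.E} {p : List G.E}
    (h : vert K G (G.s e) = pathProd K G (e :: p) * starProd K G (e :: p)) {f : G.E}
    (hf : G.s f = G.s e) : f = e := by
  by_contra hfe
  apply vert_ne_zero K (G.r f)
  calc vert K G (G.r f) = ghost K G f * vert K G (G.s e) * edge K G f := by
        rw [← hf, ghost_mul_vert, ghost_mul_edge]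
    _ = 0 := by
        rw [h, pathProd_cons, ← mul_assoc, ← mul_assoc, ghost_mul_edge_of_ne hfe, zero_mul,
          zero_mul, zero_mul]

end LPAGraph

open LPAGraph in
/-- If the Leavitt path algebra of a graph `E` is graded exchange (for every
homogeneous `x` there is an idempotent `u` in the 0-component with `u ∈ x·L`
and `u ∈ x ∘ L`), then `E` is a no-exit graph: no cycle has an exit. -/
theorem stmt_19 (K : Type) [Field K] (G : LPAGraph)
    (hExch : ∀ n : ℤ, ∀ x ∈ component K G n, ∃ u ∈ component K G 0,
      u * u = u ∧ (∃ r ∈ lpa K G, u = x * r) ∧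
      (∃ s ∈ lpa K G, u = x + s - x * s)) :
    ∀ (c : List G.E) (hc : c ≠ []), IsPath G c →
      G.r (c.getLast hc) = G.s (c.head hc) →
      (c.map G.s).Nodup →
      ∀ f : G.E, (∃ e ∈ c, G.s f = G.s e) → f ∈ c := by
  intro c hc hpath hclosed _ f ⟨e, hec, hfe⟩
  obtain ⟨p, hp⟩ := exists_isPath_cons_append_singleton hc hpath hclosed hec
  obtain ⟨u, hu, -, ⟨r, -, hur⟩, ⟨t, -, hut⟩⟩ := hExch _ _ (pathProd_mem_component hp)
  rw [eq_of_vert_eq_pathProd_mul_starProd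
    (vert_eq_pathProd_mul_starProd_of_exchange hp hu hur hut) hfe]
  exact hec
end
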